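/- Let C_t be the cycle of order t ≥ 3 and let G be a connected graph of order r ≥ 2. For any vertex v of C_t, the strong metric dimension of the rooted product graph satisfies dim_s(G∘_v C_t) = r⌈t/2⌉ − 1. -/

import Mathlib

/-!
Rotate the cycle so that the root is `0` and put `K = ⌈t/2⌉`. Inside a copy of `C_t` distances
are cycle distances, and a geodesic between two copies runs through both of their roots.
A strong metric generator contains a vertex of every mutually maximally distant pair. The
non-root antipodal pairs of a copy contain `K - 1` disjoint ones, so every copy holds at least
`K - 1` generator vertices, and at least `K` if it holds the vertices antipodal to its root.
Vertices antipodal to their roots in different copies are mutually maximally distant, so at most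
one copy falls short, and a generator has at least `rK - 1` vertices. A generator of that size
is given by the last `K` positions of every copy, less one vertex.
-/

namespace RootedStrong

variable {V : Type*}

/-- `u` is maximally distant from `v`: every neighbor `w` of `u` satisfies `d(v,w) ≤ d(u,v)`. -/
def MaxDistant (G : SimpleGraph V) (u v : V) : Prop :=
  ∀ w, G.Adj u w → G.dist v w ≤ G.dist u v

/-- `u` and `v` are mutually maximally distant. -/
def MMD (G : SimpleGraph V) (u v : V) : Prop :=
  MaxDistant G u v ∧ MaxDistant G v u

/-- The boundary `∂(G)` of a graph. -/
def boundary (G : SimpleGraph V) : Set V := {u | ∃ v, MMD G u v}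

/-- A vertex is simplicial if its neighborhood induces a complete graph. -/
def Simplicial (G : SimpleGraph V) (u : V) : Prop :=
  ∀ x ∈ G.neighborSet u, ∀ y ∈ G.neighborSet u, x ≠ y → G.Adj x y

/-- The set `σ(G)` of simplicial vertices. -/
def simplicialSet (G : SimpleGraph V) : Set V := {u | Simplicial G u}

/-- `w` strongly resolves `u` and `v`. -/
def StronglyResolves (G : SimpleGraph V) (w u v : V) : Prop :=
  G.dist w u = G.dist w v + G.dist v u ∨ G.dist w v = G.dist w u + G.dist u v

/-- A set of vertices is a strong metric generator if every pair of distinct vertices is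
strongly resolved by some of its elements. -/
def IsStrongGenerator (G : SimpleGraph V) (S : Set V) : Prop :=
  ∀ u v : V, u ≠ v → ∃ w ∈ S, StronglyResolves G w u v

/-- The strong metric dimension of a graph. -/
noncomputable def sdim (G : SimpleGraph V) [Fintype V] : ℕ :=
  sInf {n | ∃ S : Finset V, S.card = n ∧ IsStrongGenerator G (S : Set V)}

/-- A strong metric basis: a strong metric generator of minimum cardinality. -/
def IsStrongBasis (G : SimpleGraph V) [Fintype V] (S : Finset V) : Prop :=
  IsStrongGenerator G (S : Set V) ∧ S.card = sdim G

/-- The rooted product graph `G ∘_v H`. -/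
def rootedProd {α β : Type*} (G : SimpleGraph α) (H : SimpleGraph β) (v : β) :
    SimpleGraph (α × β) where
  Adj p q := (p.1 = q.1 ∧ H.Adj p.2 q.2) ∨ (p.2 = v ∧ q.2 = v ∧ G.Adj p.1 q.1)
  symm := ⟨by
    rintro ⟨a, x⟩ ⟨b, y⟩ (⟨h1, h2⟩ | ⟨h1, h2, h3⟩)
    · exact Or.inl ⟨h1.symm, h2.symm⟩
    · exact Or.inr ⟨h2, h1, h3.symm⟩⟩
  loopless := ⟨by
    rintro ⟨a, x⟩ (⟨_, h2⟩ | ⟨_, _, h3⟩)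
    · exact H.irrefl h2
    · exact G.irrefl h3⟩

/-- Two distinct vertices are true twins if they have equal closed neighborhoods. -/
def TrueTwins (G : SimpleGraph V) (x y : V) : Prop :=
  x ≠ y ∧ ∀ z, (z = x ∨ G.Adj x z) ↔ (z = y ∨ G.Adj y z)

/-- A twin-free clique: a clique containing no pair of true twins. -/
def IsTwinFreeClique (G : SimpleGraph V) (X : Set V) : Prop :=
  (∀ x ∈ X, ∀ y ∈ X, x ≠ y → G.Adj x y) ∧ ∀ x ∈ X, ∀ y ∈ X, ¬ TrueTwins G x y

/-- The twin-free clique number `ϖ(G)`. -/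
noncomputable def twinFreeCliqueNum (G : SimpleGraph V) : ℕ :=
  sSup {n | ∃ X : Set V, IsTwinFreeClique G X ∧ X.ncard = n}

open SimpleGraph

section Metric

variable {V W : Type*} {G : SimpleGraph V} {G' : SimpleGraph W}

theorem _root_.SimpleGraph.Walk.exists_length_le_of_adj_or_eq {f : V → W}
    (hf : ∀ x y, G.Adj x y → G'.Adj (f x) (f y) ∨ f x = f y) {u v : V} (p : G.Walk u v) :
    ∃ q : G'.Walk (f u) (f v), q.length ≤ p.length := by
  induction p with
  | nil => exact ⟨.nil, le_rfl⟩
  | @cons x y _ h _ ih =>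
    obtain ⟨q, hq⟩ := ih
    rcases hf x y h with hadj | heq
    · exact ⟨.cons hadj q, by simpa using hq⟩
    · exact ⟨q.copy heq.symm rfl, by simp only [Walk.length_copy, Walk.length_cons]; omega⟩

theorem _root_.SimpleGraph.dist_le_dist_of_adj_or_eq {f : V → W}
    (hf : ∀ x y, G.Adj x y → G'.Adj (f x) (f y) ∨ f x = f y) {u v : V} (h : G.Reachable u v) :
    G'.dist (f u) (f v) ≤ G.dist u v := by
  obtain ⟨p, hp⟩ := h.exists_walk_length_eq_dist
  obtain ⟨q, hq⟩ := p.exists_length_le_of_adj_or_eq hf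
  exact (dist_le q).trans (hp ▸ hq)

theorem _root_.SimpleGraph.Hom.dist_le (f : G →g G') {u v : V} (h : G.Reachable u v) :
    G'.dist (f u) (f v) ≤ G.dist u v :=
  dist_le_dist_of_adj_or_eq (fun _ _ hxy => .inl (f.map_adj hxy)) h

theorem _root_.SimpleGraph.Iso.dist_eq (e : G ≃g G') (u v : V) :
    G'.dist (e u) (e v) = G.dist u v := by
  by_cases h : G.Reachable u v
  · refine le_antisymm (e.toHom.dist_le h) ?_
    simpa using e.symm.toHom.dist_le (e.reachable_iff.2 h)
  · rw [dist_eq_zero_of_not_reachable h, dist_eq_zero_of_not_reachable (mt e.reachable_iff.1 h)]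

theorem _root_.SimpleGraph.Adj.dist_le_dist_add_one {x z : V} (h : G.Adj x z) (u : V) :
    G.dist x u ≤ G.dist z u + 1 := by
  have := h.symm.diff_dist_adj (u := u)
  rw [dist_comm (u := u), dist_comm (u := u)] at this
  omega

theorem _root_.SimpleGraph.dist_eq_of_potential {y : V} (f : V → ℕ)
    (hf0 : ∀ x, f x = 0 ↔ x = y) (hlip : ∀ x z, G.Adj x z → f x ≤ f z + 1)
    (hdesc : ∀ x, x ≠ y → ∃ z, G.Adj x z ∧ f z < f x) (x : V) : G.dist x y = f x := by
  have hwalk : ∀ n x, f x = n → ∃ p : G.Walk x y, p.length = n := by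
    intro n
    induction n with
    | zero => exact fun x hx => ⟨(Walk.nil).copy rfl ((hf0 x).1 hx), by simp⟩
    | succ n ih =>
      intro x hx
      obtain ⟨z, hxz, hz⟩ := hdesc x fun h => by rw [(hf0 x).2 h] at hx; omega
      obtain ⟨p, hp⟩ := ih z (by have := hlip x z hxz; omega)
      exact ⟨.cons hxz p, by simp [hp]⟩
  have hlower : ∀ {a b} (p : G.Walk a b), f a ≤ p.length + f b := by
    intro a b p
    induction p with
    | nil => simp
    | cons h _ ih => have := hlip _ _ h; simp only [Walk.length_cons]; omega
  obtain ⟨p, hp⟩ := hwalk _ x rfl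
  refine le_antisymm (hp ▸ dist_le p) ?_
  obtain ⟨q, hq⟩ := Reachable.exists_walk_length_eq_dist ⟨p⟩
  have := hlower q
  rw [(hf0 y).2 rfl] at this
  omega

end Metric

section StrongDimension

variable {V W : Type*} {G : SimpleGraph V}

theorem StronglyResolves.symm {w u v : V} (h : StronglyResolves G w u v) :
    StronglyResolves G w v u :=
  Or.symm h

theorem stronglyResolves_self (u v : V) : StronglyResolves G u u v :=
  .inr (by rw [dist_self, zero_add])

theorem sdim_le_card [Fintype V] {S : Finset V} (hS : IsStrongGenerator G S) :
    sdim G ≤ S.card :=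
  Nat.sInf_le ⟨S, rfl, hS⟩

theorem exists_isStrongGenerator_card_eq_sdim [Fintype V] :
    ∃ S : Finset V, S.card = sdim G ∧ IsStrongGenerator G S :=
  Nat.sInf_mem (s := {n | ∃ S : Finset V, S.card = n ∧ IsStrongGenerator G S})
    ⟨_, Finset.univ, rfl, fun u v _ => ⟨u, by simp, stronglyResolves_self u v⟩⟩

theorem sdim_le_of_iso [Fintype V] [Fintype W] {G' : SimpleGraph W} (e : G ≃g G') :
    sdim G' ≤ sdim G := by
  classical
  obtain ⟨S, hcard, hS⟩ := exists_isStrongGenerator_card_eq_sdim (G := G)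
  rw [← hcard, ← Finset.card_image_of_injective S e.injective]
  refine sdim_le_card fun u v huv => ?_
  obtain ⟨w, hw, hres⟩ := hS (e.symm u) (e.symm v) (e.symm.injective.ne huv)
  refine ⟨e w, by simpa using hw, ?_⟩
  simpa only [StronglyResolves, ← e.dist_eq, RelIso.apply_symm_apply] using hres

theorem sdim_congr [Fintype V] [Fintype W] {G' : SimpleGraph W} (e : G ≃g G') :
    sdim G = sdim G' :=
  le_antisymm (sdim_le_of_iso e.symm) (sdim_le_of_iso e)

/-- The first step from `v` towards `w` moves away from `u`. -/
theorem not_maxDistant_of_dist_eq_add (hG : G.Preconnected) {u v w : V} (hwv : w ≠ v)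
    (h : G.dist w u = G.dist w v + G.dist v u) : ¬ MaxDistant G v u := by
  intro hmax
  obtain ⟨p, hp⟩ := (hG v w).exists_walk_length_eq_dist
  cases p with
  | nil => exact hwv rfl
  | @cons _ z _ hvz p =>
    have hzw : G.dist z w ≤ p.length := dist_le p
    have htri : G.dist u w ≤ G.dist u z + G.dist z w := (hG z w).dist_triangle_right u
    have := hmax z hvz
    rw [Walk.length_cons] at hp
    have := dist_comm (G := G) (u := u) (v := w)
    have := dist_comm (G := G) (u := w) (v := v)
    omega

theorem mem_or_mem_of_mmd (hG : G.Preconnected) {S : Set V} (hS : IsStrongGenerator G S)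
    {u v : V} (huv : u ≠ v) (h : MMD G u v) : u ∈ S ∨ v ∈ S := by
  obtain ⟨w, hwS, hres⟩ := hS u v huv
  by_cases hwu : w = u
  · exact .inl (hwu ▸ hwS)
  by_cases hwv : w = v
  · exact .inr (hwv ▸ hwS)
  rcases hres with hres | hres
  · exact (not_maxDistant_of_dist_eq_add hG hwv hres h.2).elim
  · exact (not_maxDistant_of_dist_eq_add hG hwu hres h.1).elim

end StrongDimension

section RootedProduct

variable {α β β' : Type*} {G : SimpleGraph α} {H : SimpleGraph β} {v : β}

theorem rootedProd_adj {p q : α × β} :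
    (rootedProd G H v).Adj p q ↔
      (p.1 = q.1 ∧ H.Adj p.2 q.2) ∨ (p.2 = v ∧ q.2 = v ∧ G.Adj p.1 q.1) :=
  Iff.rfl

def rootedProdCongrRight {H' : SimpleGraph β'} (e : H ≃g H') (v : β) :
    rootedProd G H v ≃g rootedProd G H' (e v) where
  toEquiv := (Equiv.refl α).prodCongr e.toEquiv
  map_rel_iff' := by simp [rootedProd_adj, e.map_adj_iff]

variable (G v) in
def copyHom (a : α) : H →g rootedProd G H v where
  toFun x := (a, x)
  map_rel' h := .inl ⟨rfl, h⟩

variable (H v) in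
def rootHom : G →g rootedProd G H v where
  toFun a := (a, v)
  map_rel' h := .inr ⟨rfl, rfl, h⟩

theorem rootedProd_adj_snd {p q : α × β} (h : (rootedProd G H v).Adj p q) :
    H.Adj p.2 q.2 ∨ p.2 = q.2 := by
  rcases h with ⟨-, h⟩ | ⟨hp, hq, -⟩
  exacts [.inl h, .inr (hp.trans hq.symm)]

theorem rootedProd_preconnected (hG : G.Preconnected) (hH : H.Preconnected) :
    (rootedProd G H v).Preconnected := by
  rintro ⟨a, x⟩ ⟨b, y⟩
  exact (((hH x v).map (copyHom G v a)).trans ((hG a b).map (rootHom H v))).trans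
    ((hH v y).map (copyHom G v b))

theorem dist_rootedProd_same (hH : H.Preconnected) (a : α) (x y : β) :
    (rootedProd G H v).dist (a, x) (a, y) = H.dist x y := by
  refine le_antisymm ((copyHom G v a).dist_le (hH x y)) ?_
  exact dist_le_dist_of_adj_or_eq (fun _ _ => rootedProd_adj_snd) ((hH x y).map (copyHom G v a))

theorem dist_rootedProd_le (hG : G.Preconnected) (hH : H.Preconnected) (a b : α) (x y : β) :
    (rootedProd G H v).dist (a, x) (b, y) ≤ H.dist x v + G.dist a b + H.dist v y := by
  have hP := rootedProd_preconnected hG hH (v := v)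
  calc (rootedProd G H v).dist (a, x) (b, y)
      ≤ (rootedProd G H v).dist (a, x) (a, v) + (rootedProd G H v).dist (a, v) (b, v) +
          (rootedProd G H v).dist (b, v) (b, y) :=
        ((hP _ _).dist_triangle_right _).trans (add_le_add_left ((hP _ _).dist_triangle_left _) _)
    _ ≤ _ := by
        rw [dist_rootedProd_same hH, dist_rootedProd_same hH]
        gcongr
        exact (rootHom H v).dist_le (hG a b)

theorem le_length_of_fst_ne {p q : α × β}
    (w : (rootedProd G H v).Walk p q) (hpq : p.1 ≠ q.1) :
    H.dist p.2 v + G.dist p.1 q.1 + H.dist v q.2 ≤ w.length := by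
  induction w with
  | nil => exact absurd rfl hpq
  | @cons p m q h w ih =>
    rw [Walk.length_cons]
    rcases h with ⟨h1, h2⟩ | ⟨h1, h2, h3⟩
    · have := ih (h1 ▸ hpq)
      have := h2.dist_le_dist_add_one v
      rw [h1]
      omega
    · obtain ⟨w', hw'⟩ := w.exists_length_le_of_adj_or_eq fun _ _ => rootedProd_adj_snd
      have hsnd := (dist_le w').trans hw'
      have hfst := h3.dist_le_dist_add_one q.1
      rw [h1, dist_self]
      rw [h2] at hsnd
      by_cases hmq : m.1 = q.1
      · rw [hmq, dist_self] at hfst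
        omega
      · have := ih hmq
        omega

theorem dist_rootedProd_of_ne (hG : G.Preconnected) (hH : H.Preconnected) {a b : α}
    (hab : a ≠ b) (x y : β) :
    (rootedProd G H v).dist (a, x) (b, y) = H.dist x v + G.dist a b + H.dist v y := by
  refine le_antisymm (dist_rootedProd_le hG hH a b x y) ?_
  obtain ⟨w, hw⟩ := (rootedProd_preconnected hG hH (a, x) (b, y)).exists_walk_length_eq_dist
  exact hw ▸ le_length_of_fst_ne w hab

theorem maxDistant_rootedProd_same (hH : H.Preconnected) {a : α} {x y : β} (hx : x ≠ v)
    (h : MaxDistant H x y) : MaxDistant (rootedProd G H v) (a, x) (a, y) := by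
  rintro ⟨b, z⟩ (⟨rfl, hxz⟩ | ⟨hxv, -, -⟩)
  · rw [dist_rootedProd_same hH, dist_rootedProd_same hH]
    exact h z hxz
  · exact absurd hxv hx

theorem maxDistant_rootedProd_of_ne (hG : G.Preconnected) (hH : H.Preconnected) {a b : α}
    (hab : a ≠ b) {x : β} (hx : x ≠ v) (h : MaxDistant H x v) (y : β) :
    MaxDistant (rootedProd G H v) (a, x) (b, y) := by
  rintro ⟨c, z⟩ (⟨rfl, hxz⟩ | ⟨hxv, -, -⟩)
  · rw [dist_rootedProd_of_ne hG hH hab.symm, dist_rootedProd_of_ne hG hH hab, dist_comm (u := b),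
      dist_comm (u := y)]
    have := h z hxz
    omega
  · exact absurd hxv hx

theorem StronglyResolves.rootedProd_of_ne (hG : G.Preconnected) (hH : H.Preconnected)
    {x y : β} (h : StronglyResolves H v x y) {a c : α} (hca : c ≠ a) (z : β) :
    StronglyResolves (rootedProd G H v) (c, z) (a, x) (a, y) := by
  unfold StronglyResolves at h ⊢
  rw [dist_rootedProd_of_ne hG hH hca, dist_rootedProd_of_ne hG hH hca, dist_rootedProd_same hH,
    dist_rootedProd_same hH]
  omega

theorem stronglyResolves_rootedProd_of_dist_eq_add (hG : G.Preconnected) (hH : H.Preconnected)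
    {a b : α} (hab : a ≠ b) {x z : β} (h : H.dist z v = H.dist z x + H.dist x v) (y : β) :
    StronglyResolves (rootedProd G H v) (a, z) (a, x) (b, y) := by
  right
  rw [dist_rootedProd_of_ne hG hH hab, dist_rootedProd_of_ne hG hH hab, dist_rootedProd_same hH, h]
  omega

end RootedProduct

section Cycle

variable {t : ℕ}

/-- `a - b + (b - a)` is `|a - b|` in `ℕ`. -/
def cycleDist (t a b : ℕ) : ℕ := min (a - b + (b - a)) (t - (a - b + (b - a)))

theorem cycleGraph_adj_iff_val (ht : 2 ≤ t) {x y : Fin t} :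
    (cycleGraph t).Adj x y ↔
      y.val = x.val + 1 ∨ x.val = y.val + 1 ∨ (x.val = 0 ∧ y.val = t - 1) ∨
        (y.val = 0 ∧ x.val = t - 1) := by
  have := x.isLt
  have := y.isLt
  rw [cycleGraph_adj']
  rcases lt_trichotomy x y with hxy | rfl | hxy
  · rw [Fin.coe_sub_iff_lt.2 hxy, Fin.sub_val_of_le hxy.le]
    rw [Fin.lt_def] at hxy
    omega
  · rw [Fin.sub_val_of_le le_rfl]
    omega
  · rw [Fin.coe_sub_iff_lt.2 hxy, Fin.sub_val_of_le hxy.le]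
    rw [Fin.lt_def] at hxy
    omega

theorem cycleGraph_dist (ht : 2 ≤ t) (x y : Fin t) :
    (cycleGraph t).dist x y = cycleDist t x y := by
  have hy := y.isLt
  refine dist_eq_of_potential (fun z : Fin t => cycleDist t z y) (fun z => ?_) (fun z w h => ?_)
    (fun z hz => ?_) x
  · have := z.isLt
    rw [Fin.ext_iff]
    unfold cycleDist
    omega
  · have := z.isLt
    have := w.isLt
    rw [cycleGraph_adj_iff_val ht] at h
    unfold cycleDist
    omega
  · have hz' : z.val ≠ y.val := Fin.val_ne_of_ne hz
    have := z.isLt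
    let succ : Fin t := ⟨if z.val + 1 = t then 0 else z.val + 1, by split_ifs <;> omega⟩
    let pred : Fin t := ⟨if z.val = 0 then t - 1 else z.val - 1, by split_ifs <;> omega⟩
    have hsucc : (cycleGraph t).Adj z succ := by
      rw [cycleGraph_adj_iff_val ht]
      dsimp only [succ]
      split_ifs <;> omega
    have hpred : (cycleGraph t).Adj z pred := by
      rw [cycleGraph_adj_iff_val ht]
      dsimp only [pred]
      split_ifs <;> omega
    have : cycleDist t succ y < cycleDist t z y ∨ cycleDist t pred y < cycleDist t z y := by
      dsimp only [succ, pred]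
      unfold cycleDist
      split_ifs <;> omega
    rcases this with h | h
    exacts [⟨succ, hsucc, h⟩, ⟨pred, hpred, h⟩]

theorem cycleDist_le_half {a b : ℕ} (ha : a < t) (hb : b < t) : cycleDist t a b ≤ t / 2 := by
  unfold cycleDist
  omega

theorem maxDistant_cycleGraph (ht : 2 ≤ t) {x y : Fin t} (h : cycleDist t x y = t / 2) :
    MaxDistant (cycleGraph t) x y := fun w _ => by
  rw [cycleGraph_dist ht, cycleGraph_dist ht, h]
  exact cycleDist_le_half y.isLt w.isLt

variable [NeZero t]

def cycleGraphSubRight (v : Fin t) : cycleGraph t ≃g cycleGraph t where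
  toEquiv := Equiv.subRight v
  map_rel_iff' := by simp [cycleGraph_adj']

theorem stronglyResolves_cycleGraph_zero (ht : 2 ≤ t) {x y : Fin t} (hx : x.val ≤ t / 2)
    (hy : y.val ≤ t / 2) : StronglyResolves (cycleGraph t) 0 x y := by
  simp only [StronglyResolves, cycleGraph_dist ht, Fin.val_zero, cycleDist]
  omega

theorem exists_half_le_dist_eq_add (ht : 2 ≤ t) (x : Fin t) :
    ∃ z : Fin t, t / 2 ≤ z.val ∧
      (cycleGraph t).dist z 0 = (cycleGraph t).dist z x + (cycleGraph t).dist x 0 := by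
  by_cases hx : t / 2 ≤ x.val
  · exact ⟨x, hx, by simp⟩
  · refine ⟨⟨t / 2, by omega⟩, le_rfl, ?_⟩
    simp only [cycleGraph_dist ht, Fin.val_zero, cycleDist]
    omega

end Cycle

section RootedCycle

open Finset

variable {α : Type*} {G : SimpleGraph α} {t : ℕ} [NeZero t]

theorem sdim_rootedProd_cycleGraph_eq_zero [Fintype α] (v : Fin t) :
    sdim (rootedProd G (cycleGraph t) v) = sdim (rootedProd G (cycleGraph t) 0) := by
  convert sdim_congr (rootedProdCongrRight (G := G) (cycleGraphSubRight v) v)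
  simp [cycleGraphSubRight]

theorem mem_or_mem_of_cycleDist_eq_half (hG : G.Preconnected) (ht : 2 ≤ t)
    {S : Set (α × Fin t)} (hS : IsStrongGenerator (rootedProd G (cycleGraph t) 0) S) (a : α)
    {x y : Fin t} (hx : x ≠ 0) (hy : y ≠ 0) (hxy : cycleDist t x y = t / 2) :
    (a, x) ∈ S ∨ (a, y) ∈ S := by
  have hyx : cycleDist t y x = t / 2 := by unfold cycleDist at *; omega
  have hne : (a, x) ≠ (a, y) := fun h => by
    rw [Prod.mk_inj, Fin.ext_iff] at h
    unfold cycleDist at hxy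
    omega
  exact mem_or_mem_of_mmd (rootedProd_preconnected hG cycleGraph_preconnected) hS hne
    ⟨maxDistant_rootedProd_same cycleGraph_preconnected hx (maxDistant_cycleGraph (by omega) hxy),
      maxDistant_rootedProd_same cycleGraph_preconnected hy
        (maxDistant_cycleGraph (by omega) hyx)⟩

theorem mem_or_mem_of_ne_of_cycleDist_eq_half (hG : G.Preconnected) (ht : 2 ≤ t)
    {S : Set (α × Fin t)} (hS : IsStrongGenerator (rootedProd G (cycleGraph t) 0) S) {a b : α}
    (hab : a ≠ b) {x y : Fin t} (hx : cycleDist t x 0 = t / 2) (hy : cycleDist t y 0 = t / 2) :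
    (a, x) ∈ S ∨ (b, y) ∈ S := by
  have hne_zero : ∀ z : Fin t, cycleDist t z 0 = t / 2 → z ≠ 0 := fun z hz h => by
    rw [h, Fin.val_zero] at hz
    unfold cycleDist at hz
    omega
  refine mem_or_mem_of_mmd (rootedProd_preconnected hG cycleGraph_preconnected) hS
    (fun h => hab (Prod.mk_inj.1 h).1) ⟨?_, ?_⟩
  · exact maxDistant_rootedProd_of_ne hG cycleGraph_preconnected hab (hne_zero x hx)
      (maxDistant_cycleGraph (by omega) hx) y
  · exact maxDistant_rootedProd_of_ne hG cycleGraph_preconnected hab.symm (hne_zero y hy)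
      (maxDistant_cycleGraph (by omega) hy) x

theorem le_card_filter_fst_add_one [DecidableEq α] (hG : G.Preconnected) (ht : 2 ≤ t)
    {S : Finset (α × Fin t)} (hS : IsStrongGenerator (rootedProd G (cycleGraph t) 0) S) (a : α) :
    (t + 1) / 2 ≤ #{p ∈ S | p.1 = a} + 1 := by
  have := card_le_card_of_forall_subsingleton
    (fun (i : ℕ) (p : α × Fin t) => p.2.val = i ∨ p.2.val = i + t / 2)
    (s := Icc 1 ((t + 1) / 2 - 1)) (t := {p ∈ S | p.1 = a}) (fun i hi => ?_)
    (fun p _ i hi j hj => by simp only [mem_Icc, Set.mem_ofPred_eq] at hi hj; omega)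
  · simp only [Nat.card_Icc] at this
    omega
  rw [mem_Icc] at hi
  rcases mem_or_mem_of_cycleDist_eq_half hG ht hS a (x := ⟨i, by omega⟩)
    (y := ⟨i + t / 2, by omega⟩) (by rw [ne_eq, Fin.ext_iff, Fin.val_zero, Fin.val_mk]; omega) (by rw [ne_eq, Fin.ext_iff, Fin.val_zero, Fin.val_mk]; omega)
    (show cycleDist t i (i + t / 2) = t / 2 by unfold cycleDist; omega) with h | h
  · exact ⟨(a, ⟨i, _⟩), mem_filter.2 ⟨h, rfl⟩, .inl rfl⟩
  · exact ⟨(a, ⟨i + t / 2, _⟩), mem_filter.2 ⟨h, rfl⟩, .inr rfl⟩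

theorem le_card_filter_fst_of_far_mem [DecidableEq α] (hG : G.Preconnected) (ht : 2 ≤ t)
    {S : Finset (α × Fin t)} (hS : IsStrongGenerator (rootedProd G (cycleGraph t) 0) S) {a : α}
    (hfar : ∀ x : Fin t, cycleDist t x 0 = t / 2 → (a, x) ∈ S) :
    (t + 1) / 2 ≤ #{p ∈ S | p.1 = a} := by
  have := card_le_card_of_forall_subsingleton
    (fun (i : ℕ) (p : α × Fin t) => p.2.val = i ∨ (i < t / 2 ∧ p.2.val = i + (t + 1) / 2))
    (s := Icc 1 ((t + 1) / 2)) (t := {p ∈ S | p.1 = a}) (fun i hi => ?_)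
    (fun p _ i hi j hj => by simp only [mem_Icc, Set.mem_ofPred_eq] at hi hj; omega)
  · simp only [Nat.card_Icc] at this
    omega
  rw [mem_Icc] at hi
  by_cases hi' : i < t / 2
  · rcases mem_or_mem_of_cycleDist_eq_half hG ht hS a (x := ⟨i, by omega⟩)
      (y := ⟨i + (t + 1) / 2, by omega⟩) (by rw [ne_eq, Fin.ext_iff, Fin.val_zero, Fin.val_mk]; omega)
      (by rw [ne_eq, Fin.ext_iff, Fin.val_zero, Fin.val_mk]; omega)
      (show cycleDist t i (i + (t + 1) / 2) = t / 2 by unfold cycleDist; omega) with h | h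
    · exact ⟨(a, ⟨i, _⟩), mem_filter.2 ⟨h, rfl⟩, .inl rfl⟩
    · exact ⟨(a, ⟨i + (t + 1) / 2, _⟩), mem_filter.2 ⟨h, rfl⟩, .inr ⟨hi', rfl⟩⟩
  · refine ⟨(a, ⟨i, by omega⟩), mem_filter.2 ⟨hfar _ ?_, rfl⟩, .inl rfl⟩
    show cycleDist t i 0 = t / 2
    unfold cycleDist
    omega

theorem exists_forall_ne_far_mem [Nonempty α] (hG : G.Preconnected) (ht : 2 ≤ t)
    {S : Set (α × Fin t)} (hS : IsStrongGenerator (rootedProd G (cycleGraph t) 0) S) :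
    ∃ a₀, ∀ a ≠ a₀, ∀ x : Fin t, cycleDist t x 0 = t / 2 → (a, x) ∈ S := by
  by_cases h : ∃ (a₀ : α) (x₀ : Fin t), cycleDist t x₀ 0 = t / 2 ∧ (a₀, x₀) ∉ S
  · obtain ⟨a₀, x₀, hx₀, hx₀S⟩ := h
    exact ⟨a₀, fun a ha x hx =>
      (mem_or_mem_of_ne_of_cycleDist_eq_half hG ht hS ha hx hx₀).resolve_right hx₀S⟩
  · exact ⟨Classical.arbitrary α, fun a _ x hx => by_contra fun hax => h ⟨a, x, hx, hax⟩⟩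

theorem card_mul_le_card_add_one [Fintype α] [Nonempty α] [DecidableEq α] (hG : G.Preconnected)
    (ht : 2 ≤ t) {S : Finset (α × Fin t)}
    (hS : IsStrongGenerator (rootedProd G (cycleGraph t) 0) S) :
    Fintype.card α * ((t + 1) / 2) ≤ #S + 1 := by
  obtain ⟨a₀, ha₀⟩ := exists_forall_ne_far_mem hG ht hS
  have hgood : ∀ a ∈ univ.erase a₀, (t + 1) / 2 ≤ #{p ∈ S | p.1 = a} := fun a ha =>
    le_card_filter_fst_of_far_mem hG ht hS (ha₀ a (ne_of_mem_erase ha))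
  calc Fintype.card α * ((t + 1) / 2)
      = #(univ.erase a₀) * ((t + 1) / 2) + (t + 1) / 2 := by
        rw [← card_univ, ← card_erase_add_one (mem_univ a₀), add_one_mul]
    _ ≤ ∑ a ∈ univ.erase a₀, #{p ∈ S | p.1 = a} + (#{p ∈ S | p.1 = a₀} + 1) :=
        add_le_add (card_nsmul_le_sum _ _ _ hgood) (le_card_filter_fst_add_one hG ht hS a₀)
    _ = #S + 1 := by
        rw [card_eq_sum_card_fiberwise (s := S) (fun p _ => mem_coe.2 (mem_univ p.1)),
          ← add_sum_erase _ _ (mem_univ a₀)]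
        ring

/-- The generator is positions `⌊t/2⌋, …, t - 1` of every copy, less `(a₀, ⌊t/2⌋)`: in copy
`a₀` the other copies act as its root, and `⌊t/2⌋ + 1, …, t - 1, 0` is again half of the cycle. -/
theorem exists_isStrongGenerator_card_add_one_eq [Fintype α] [DecidableEq α]
    (hG : G.Preconnected) (ht : 3 ≤ t) (hα : 2 ≤ Fintype.card α) :
    ∃ S : Finset (α × Fin t), #S + 1 = Fintype.card α * ((t + 1) / 2) ∧
      IsStrongGenerator (rootedProd G (cycleGraph t) 0) S := by
  have hH : (cycleGraph t).Preconnected := cycleGraph_preconnected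
  obtain ⟨a₀⟩ : Nonempty α := Fintype.card_pos_iff.1 (by omega)
  let d : Fin t := ⟨t / 2, by omega⟩
  let S := (univ ×ˢ Ici d).erase (a₀, d)
  have hmem : ∀ a (x : Fin t), t / 2 ≤ x.val → (a = a₀ → t / 2 < x.val) → (a, x) ∈ S := by
    intro a x hx hax
    simp only [S, d, mem_erase, mem_product, mem_univ, mem_Ici, Fin.le_def, Prod.mk.injEq,
      Fin.ext_iff, true_and, ne_eq]
    exact ⟨fun h => by have := hax h.1; omega, hx⟩
  have hcross : ∀ a b (x y : Fin t), a ≠ b → a ≠ a₀ →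
      ∃ w ∈ (S : Set (α × Fin t)),
        StronglyResolves (rootedProd G (cycleGraph t) 0) w (a, x) (b, y) := by
    intro a b x y hab ha
    obtain ⟨z, hz, hzx⟩ := exists_half_le_dist_eq_add (by omega) x
    exact ⟨(a, z), hmem a z hz (absurd · ha),
      stronglyResolves_rootedProd_of_dist_eq_add hG hH hab hzx y⟩
  refine ⟨S, ?_, ?_⟩
  · rw [card_erase_add_one (by simp [d]), card_product, card_univ, Fin.card_Ici]
    congr 1
    dsimp only [d]
    omega
  rintro ⟨a, x⟩ ⟨b, y⟩ hne
  by_cases hab : a = b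
  · subst hab
    by_cases hx : t / 2 < x.val
    · exact ⟨(a, x), hmem a x hx.le fun _ => hx, stronglyResolves_self _ _⟩
    by_cases hy : t / 2 < y.val
    · exact ⟨(a, y), hmem a y hy.le fun _ => hy, (stronglyResolves_self _ _).symm⟩
    obtain ⟨c, hc⟩ := Fintype.exists_ne_of_one_lt_card (by omega) a
    refine ⟨(c, ⟨t - 1, by omega⟩), hmem c _ (by dsimp only; omega) fun _ => by dsimp only; omega,
      ?_⟩
    exact (stronglyResolves_cycleGraph_zero (by omega) (by omega) (by omega)).rootedProd_of_ne
      hG hH hc _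
  · by_cases ha : a = a₀
    · obtain ⟨w, hw, hres⟩ := hcross b a y x (Ne.symm hab) (ha ▸ Ne.symm hab)
      exact ⟨w, hw, hres.symm⟩
    · exact hcross a b x y hab ha

end RootedCycle

theorem statement10 {α : Type*} [Fintype α] (G : SimpleGraph α) (hG : G.Connected)
    {r t : ℕ} (hr : Fintype.card α = r) (h2 : 2 ≤ r) (h3 : 3 ≤ t) (v : Fin t) :
    (sdim (rootedProd G (SimpleGraph.cycleGraph t) v) : ℤ) = r * (((t + 1) / 2 : ℕ) : ℤ) - 1 := by
  classical
  subst hr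
  have : NeZero t := ⟨by omega⟩
  have : Nonempty α := Fintype.card_pos_iff.1 (by omega)
  rw [sdim_rootedProd_cycleGraph_eq_zero]
  obtain ⟨S, hScard, hS⟩ := exists_isStrongGenerator_card_add_one_eq hG.preconnected h3 h2
  obtain ⟨T, hTcard, hT⟩ := exists_isStrongGenerator_card_eq_sdim
    (G := rootedProd G (cycleGraph t) 0)
  have hle := sdim_le_card hS
  have hge := hTcard ▸ card_mul_le_card_add_one hG.preconnected (by omega) hT
  rw [← Nat.cast_mul]
  omega

end RootedStrong
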